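/- Let G=(V,E) be a graph and K₂ the complete graph with vertices a,b. Define radii_{a=b=1}(G ⊕ K₂) ⊆ ℝ^V to be the set of all (r_v)_{v ∈ V} such that the vector on V ∪ {a,b} extending (r_v)_{v ∈ V} by r_a = r_b = 1 lies in radii₃(G ⊕ K₂). If radii_{a=b=1}(G ⊕ K₂) has non-empty interior in ℝ^V, then radii₃(G ⊕ K₂) has non-empty interior in ℝ^{V ∪ {a,b}}. -/

import Mathlib

noncomputable section

/-- A `d`-dimensional sphere packing with contact graph `G`, centres `p` and radii `r`:
the spheres have disjoint interiors and two spheres touch iff the vertices are adjacent. -/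
def IsSpherePacking {V : Type*} (d : ℕ) (G : SimpleGraph V)
    (p : V → EuclideanSpace ℝ (Fin d)) (r : V → ℝ) : Prop :=
  (∀ v, 0 < r v) ∧
  ∀ v w : V, v ≠ w →
    r v + r w ≤ dist (p v) (p w) ∧ (dist (p v) (p w) = r v + r w ↔ G.Adj v w)

/-- The join `G ⊕ K₂` of `G` with the complete graph on two new vertices
(the two elements of `Fin 2`). -/
def joinK2 {V : Type*} (G : SimpleGraph V) : SimpleGraph (V ⊕ Fin 2) where
  Adj x y :=
    match x, y with
    | Sum.inl u, Sum.inl v => G.Adj u v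
    | Sum.inl _, Sum.inr _ => True
    | Sum.inr _, Sum.inl _ => True
    | Sum.inr i, Sum.inr j => i ≠ j
  symm := by
    constructor
    rintro (u | i) (v | j) h
    · exact h.symm
    · trivial
    · trivial
    · exact h.symm
  loopless := by
    constructor
    rintro (u | i) h
    · exact G.irrefl h
    · exact h rfl

/-- The set of radii vectors admitting a `d`-dimensional sphere packing
with contact graph `G`. -/
def radiiSet {V : Type*} (d : ℕ) (G : SimpleGraph V) : Set (V → ℝ) :=
  {r | ∃ p, IsSpherePacking d G p r}

/-!
Let `a`, `b` be the two unit spheres. Every sphere `v` of `G` touches both of them, so for a point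
`x` on the line of centres at signed distance `w` from their contact point, the powers of `x` with
respect to the spheres are `2 r_v + w²`, `w² - 2w` and `w² + 2w`. For `w > 2` all of them are
positive, so inverting about `x` and then scaling by `c > 0` gives a packing with the same contact
graph and radii `c r_v / (2 r_v + w²)`, `c / (w² - 2w)`, `c / (w² + 2w)`. This map
`(r, w, c) ↦ s` has an explicit inverse, continuous on an open set of `s` containing its image, so
it carries the open set `interior radii_{a=b=1}(G ⊕ K₂) × (2, ∞) × (0, ∞)` into an open set of
realisable radii.
-/

lemma dist_smul_add_one_sub_smul_sq {E : Type*} [NormedAddCommGroup E] [InnerProductSpace ℝ E]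
    (y a b : E) (t : ℝ) :
    dist y (t • a + (1 - t) • b) ^ 2
      = t * dist y a ^ 2 + (1 - t) * dist y b ^ 2 - t * (1 - t) * dist a b ^ 2 := by
  rw [dist_eq_norm, dist_eq_norm, dist_eq_norm, dist_eq_norm,
    show y - (t • a + (1 - t) • b) = t • (y - a) + (1 - t) • (y - b) by module,
    show a - b = (y - b) - (y - a) by abel, norm_add_sq_real, norm_sub_sq_real (y - b), norm_smul,
    norm_smul, real_inner_smul_left, real_inner_smul_right, mul_pow, mul_pow, Real.norm_eq_abs,
    Real.norm_eq_abs, sq_abs, sq_abs, real_inner_comm (y - a)]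
  ring

lemma dist_inv_smul_sq_sub_sq {E : Type*} [NormedAddCommGroup E] [InnerProductSpace ℝ E]
    (a b : E) {ra rb Da Db : ℝ} (ha : ‖a‖ ^ 2 - ra ^ 2 = Da) (hb : ‖b‖ ^ 2 - rb ^ 2 = Db)
    (hDa : Da ≠ 0) (hDb : Db ≠ 0) :
    dist (Da⁻¹ • a) (Db⁻¹ • b) ^ 2 - (ra / Da + rb / Db) ^ 2
      = (Da * Db)⁻¹ * (dist a b ^ 2 - (ra + rb) ^ 2) := by
  rw [dist_eq_norm, dist_eq_norm, norm_sub_sq_real, norm_sub_sq_real, norm_smul, norm_smul,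
    real_inner_smul_left, real_inner_smul_right, mul_pow, mul_pow, Real.norm_eq_abs,
    Real.norm_eq_abs, sq_abs, sq_abs, show ‖a‖ ^ 2 = Da + ra ^ 2 by linarith,
    show ‖b‖ ^ 2 = Db + rb ^ 2 by linarith]
  field_simp
  ring

lemma pos_of_mem_radiiSet {V : Type*} {d : ℕ} {G : SimpleGraph V} {r : V → ℝ}
    (hr : r ∈ radiiSet d G) (v : V) : 0 < r v :=
  hr.choose_spec.1 v

namespace IsSpherePacking

variable {V : Type*} {d : ℕ} {G : SimpleGraph V} {p : V → EuclideanSpace ℝ (Fin d)} {r : V → ℝ}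

lemma dist_eq_of_adj (hp : IsSpherePacking d G p r) {v w : V} (h : G.Adj v w) :
    dist (p v) (p w) = r v + r w :=
  ((hp.2 v w h.ne).2).2 h

/-- Being a packing with contact graph `G` depends only on the signs of the gaps
`dist (p v) (p w) ^ 2 - (r v + r w) ^ 2`. -/
lemma of_gap_eq_mul (hp : IsSpherePacking d G p r) {p' : V → EuclideanSpace ℝ (Fin d)}
    {r' : V → ℝ} (hr' : ∀ v, 0 < r' v) (k : V → V → ℝ) (hk : ∀ v w, 0 < k v w)
    (hgap : ∀ v w, dist (p' v) (p' w) ^ 2 - (r' v + r' w) ^ 2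
      = k v w * (dist (p v) (p w) ^ 2 - (r v + r w) ^ 2)) :
    IsSpherePacking d G p' r' := by
  refine ⟨hr', fun v w hvw => ?_⟩
  obtain ⟨hle, hadj⟩ := hp.2 v w hvw
  have hs := (add_pos (hp.1 v) (hp.1 w)).le
  have hs' := (add_pos (hr' v) (hr' w)).le
  rw [← sq_le_sq₀ hs dist_nonneg] at hle
  rw [← hadj, ← sq_le_sq₀ hs' dist_nonneg, ← sq_eq_sq₀ dist_nonneg hs', ← sq_eq_sq₀ dist_nonneg hs,
    ← sub_eq_zero, hgap, mul_eq_zero, sub_eq_zero, or_iff_right (hk v w).ne', ← sub_nonneg, hgap]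
  exact ⟨mul_nonneg (hk v w).le (sub_nonneg.2 hle), Iff.rfl⟩

lemma smul (hp : IsSpherePacking d G p r) {c : ℝ} (hc : 0 < c) :
    IsSpherePacking d G (fun v => c • p v) (fun v => c * r v) :=
  hp.of_gap_eq_mul (fun v => mul_pos hc (hp.1 v)) (fun _ _ => c ^ 2) (fun _ _ => by positivity)
    fun v w => by rw [dist_smul₀, Real.norm_of_nonneg hc.le]; ring

lemma inversion (hp : IsSpherePacking d G p r) (x : EuclideanSpace ℝ (Fin d)) {D : V → ℝ}
    (hD : ∀ v, dist (p v) x ^ 2 - r v ^ 2 = D v) (hD_pos : ∀ v, 0 < D v) :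
    IsSpherePacking d G (fun v => x + (D v)⁻¹ • (p v - x)) (fun v => r v / D v) :=
  hp.of_gap_eq_mul (fun v => div_pos (hp.1 v) (hD_pos v)) (fun v w => (D v * D w)⁻¹)
    (fun v w => inv_pos.2 (mul_pos (hD_pos v) (hD_pos w))) fun v w => by
      rw [dist_add_left, ← dist_sub_right (p v) (p w) x]
      exact dist_inv_smul_sq_sub_sq _ _ (by rw [← dist_eq_norm]; exact hD v)
        (by rw [← dist_eq_norm]; exact hD w) (hD_pos v).ne' (hD_pos w).ne'

lemma exists_power_eq_of_unit_K2 {p : V ⊕ Fin 2 → EuclideanSpace ℝ (Fin d)}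
    {r : V → ℝ} (hp : IsSpherePacking d (joinK2 G) p (Sum.elim r fun _ => 1)) (w : ℝ) :
    ∃ x, ∀ u, dist (p u) x ^ 2 - Sum.elim r (fun _ => 1) u ^ 2
      = Sum.elim (fun v => 2 * r v + w ^ 2) ![w ^ 2 - 2 * w, w ^ 2 + 2 * w] u := by
  have hab : dist (p (.inr 0)) (p (.inr 1)) = 2 := by
    simpa [one_add_one_eq_two] using
      hp.dist_eq_of_adj (show (joinK2 G).Adj (.inr 0) (.inr 1) from (by decide : (0 : Fin 2) ≠ 1))
  refine ⟨((1 + w) / 2) • p (.inr 0) + (1 - (1 + w) / 2) • p (.inr 1), fun u => ?_⟩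
  rw [dist_smul_add_one_sub_smul_sq, hab]
  rcases u with v | i
  · rw [hp.dist_eq_of_adj (show (joinK2 G).Adj (.inl v) (.inr 0) from trivial),
      hp.dist_eq_of_adj (show (joinK2 G).Adj (.inl v) (.inr 1) from trivial)]
    simp only [Sum.elim_inl, Sum.elim_inr]
    ring
  · fin_cases i <;>
      simp only [Fin.zero_eta, Fin.mk_one, Sum.elim_inr, Matrix.cons_val_zero, Matrix.cons_val_one,
        Matrix.cons_val_fin_one, dist_self, hab, dist_comm (p (.inr 1))] <;>
      ring

end IsSpherePacking

section JoinK2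

variable {V : Type*} {d : ℕ} {G : SimpleGraph V}

/-- `radii_{a=b=1}(G ⊕ K₂)`. -/
def unitK2Radii (d : ℕ) (G : SimpleGraph V) : Set (V → ℝ) :=
  {r | Sum.elim r (fun _ => 1) ∈ radiiSet d (joinK2 G)}

def invertedRadii (r : V → ℝ) (w c : ℝ) : V ⊕ Fin 2 → ℝ :=
  Sum.elim (fun v => c * r v / (2 * r v + w ^ 2)) ![c / (w ^ 2 - 2 * w), c / (w ^ 2 + 2 * w)]

lemma invertedRadii_mem_radiiSet {r : V → ℝ} (hr : r ∈ unitK2Radii d G)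
    {w c : ℝ} (hw : 2 < w) (hc : 0 < c) : invertedRadii r w c ∈ radiiSet d (joinK2 G) := by
  obtain ⟨p, hp⟩ := hr
  obtain ⟨x, hx⟩ := hp.exists_power_eq_of_unit_K2 w
  have hpow_pos : ∀ u, 0 < Sum.elim (fun v => 2 * r v + w ^ 2) ![w ^ 2 - 2 * w, w ^ 2 + 2 * w] u := by
    rintro (v | i)
    · have := hp.1 (.inl v)
      simp only [Sum.elim_inl] at this ⊢
      positivity
    · fin_cases i <;>
        simp only [Fin.zero_eta, Fin.mk_one, Sum.elim_inr, Matrix.cons_val_zero,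
          Matrix.cons_val_one, Matrix.cons_val_fin_one] <;>
        nlinarith
  have hradii : invertedRadii r w c = fun u => c * (Sum.elim r (fun _ => 1) u
      / Sum.elim (fun v => 2 * r v + w ^ 2) ![w ^ 2 - 2 * w, w ^ 2 + 2 * w] u) := by
    funext u
    rcases u with v | i
    · simp [invertedRadii, mul_div_assoc]
    · fin_cases i <;> simp [invertedRadii, div_eq_mul_inv]
  rw [hradii]
  exact ⟨_, (hp.inversion x hx hpow_pos).smul hc⟩

end JoinK2

section JoinK2Inverse

variable {V : Type*}

/-- The `w` with `s_a / s_b = (w + 2) / (w - 2)`, as for `invertedRadii r w c`. -/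
def inversionOffset (s : V ⊕ Fin 2 → ℝ) : ℝ :=
  2 * (s (.inr 0) + s (.inr 1)) / (s (.inr 0) - s (.inr 1))

def inversionScale (s : V ⊕ Fin 2 → ℝ) : ℝ :=
  s (.inr 0) * (inversionOffset s ^ 2 - 2 * inversionOffset s)

def unitRadii (s : V ⊕ Fin 2 → ℝ) (v : V) : ℝ :=
  inversionOffset s ^ 2 * s (.inl v) / (inversionScale s - 2 * s (.inl v))

def inversionDomain : Set (V ⊕ Fin 2 → ℝ) :=
  {s | 0 < s (.inr 1) ∧ s (.inr 1) < s (.inr 0) ∧ ∀ v, 2 * s (.inl v) < inversionScale s}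

variable {s : V ⊕ Fin 2 → ℝ}

lemma inversionOffset_mul_sub (hs : s (.inr 1) < s (.inr 0)) :
    inversionOffset s * (s (.inr 0) - s (.inr 1)) = 2 * (s (.inr 0) + s (.inr 1)) :=
  div_mul_cancel₀ _ (sub_pos.2 hs).ne'

lemma two_lt_inversionOffset (hs : s ∈ inversionDomain) : 2 < inversionOffset s := by
  rw [inversionOffset, lt_div_iff₀ (sub_pos.2 hs.2.1)]
  linarith [hs.1]

lemma invertedRadii_unitRadii (hs : s ∈ inversionDomain) :
    invertedRadii (unitRadii s) (inversionOffset s) (inversionScale s) = s := by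
  have hw := two_lt_inversionOffset hs
  have hmul := inversionOffset_mul_sub hs.2.1
  have hc : 0 < inversionScale s := mul_pos (hs.1.trans hs.2.1) (by nlinarith)
  funext u
  rcases u with v | i
  · have hden := sub_pos.2 (hs.2.2 v)
    simp only [invertedRadii, unitRadii, Sum.elim_inl]
    generalize inversionOffset s = w at hw
    generalize inversionScale s = c at hc hden
    generalize s (.inl v) = x at hden
    rw [show 2 * (w ^ 2 * x / (c - 2 * x)) + w ^ 2 = w ^ 2 * c / (c - 2 * x) by field_simp; ring,
      div_eq_iff (by positivity)]
    field_simp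
  · fin_cases i <;> simp only [Fin.zero_eta, Fin.mk_one]
    · exact mul_div_cancel_right₀ _ (by nlinarith)
    · change inversionScale s / _ = _
      rw [div_eq_iff (by nlinarith), inversionScale]
      linear_combination inversionOffset s * hmul

variable {r : V → ℝ} {w c : ℝ}

lemma invertedRadii_inr_lt (hw : 2 < w) (hc : 0 < c) :
    invertedRadii r w c (.inr 1) < invertedRadii r w c (.inr 0) :=
  div_lt_div_of_pos_left hc (by nlinarith) (by linarith)

lemma inversionOffset_invertedRadii (hw : 2 < w) (hc : 0 < c) :
    inversionOffset (invertedRadii r w c) = w := by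
  rw [inversionOffset, div_eq_iff (sub_pos.2 (invertedRadii_inr_lt hw hc)).ne']
  have : w - 2 ≠ 0 := by linarith
  have : w + 2 ≠ 0 := by linarith
  have : w ≠ 0 := by linarith
  simp only [invertedRadii, Sum.elim_inr, Matrix.cons_val_zero, Matrix.cons_val_one]
  field_simp
  ring

lemma inversionScale_invertedRadii (hw : 2 < w) (hc : 0 < c) :
    inversionScale (invertedRadii r w c) = c := by
  rw [inversionScale, inversionOffset_invertedRadii hw hc]
  exact div_mul_cancel₀ _ (by nlinarith)

lemma invertedRadii_mem_inversionDomain (hr : ∀ v, 0 < r v) (hw : 2 < w) (hc : 0 < c) :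
    invertedRadii r w c ∈ inversionDomain := by
  refine ⟨div_pos hc (by nlinarith), invertedRadii_inr_lt hw hc, fun v => ?_⟩
  have := hr v
  rw [inversionScale_invertedRadii hw hc, invertedRadii, Sum.elim_inl, mul_div_assoc',
    div_lt_iff₀ (by positivity)]
  nlinarith [mul_pos hc (by positivity : 0 < w ^ 2)]

lemma unitRadii_invertedRadii (hr : ∀ v, 0 < r v) (hw : 2 < w) (hc : 0 < c) :
    unitRadii (invertedRadii r w c) = r := by
  funext v
  have := hr v
  rw [unitRadii, inversionOffset_invertedRadii hw hc, inversionScale_invertedRadii hw hc]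
  simp only [invertedRadii, Sum.elim_inl]
  rw [show c - 2 * (c * r v / (2 * r v + w ^ 2)) = c * w ^ 2 / (2 * r v + w ^ 2) by
    field_simp; ring, div_eq_iff (by positivity)]
  field_simp

lemma continuousOn_inversionOffset :
    ContinuousOn (inversionOffset (V := V)) {s | s (.inr 1) < s (.inr 0)} := by
  unfold inversionOffset
  exact ContinuousOn.div (by fun_prop) (by fun_prop) fun s hs => (sub_pos.2 hs).ne'

lemma continuousOn_inversionScale :
    ContinuousOn (inversionScale (V := V)) {s | s (.inr 1) < s (.inr 0)} :=
  (continuous_apply _).continuousOn.mul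
    ((continuousOn_inversionOffset.pow 2).sub (continuousOn_const.mul continuousOn_inversionOffset))

lemma continuousOn_inversionParams : ContinuousOn
    (fun s : V ⊕ Fin 2 → ℝ => (unitRadii s, inversionOffset s, inversionScale s)) inversionDomain := by
  have hsub : inversionDomain ⊆ {s : V ⊕ Fin 2 → ℝ | s (.inr 1) < s (.inr 0)} := fun s hs => hs.2.1
  have hoffset := continuousOn_inversionOffset.mono hsub
  have hscale := continuousOn_inversionScale.mono hsub
  refine ContinuousOn.prodMk (continuousOn_pi.2 fun v => ?_) (hoffset.prodMk hscale)
  exact ((hoffset.pow 2).mul (continuous_apply _).continuousOn).div (hscale.sub (by fun_prop))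
    fun s hs => (sub_pos.2 (hs.2.2 v)).ne'

lemma isOpen_inversionDomain [Finite V] : IsOpen (inversionDomain (V := V)) := by
  have : inversionDomain = {s : V ⊕ Fin 2 → ℝ | 0 < s (.inr 1) ∧ s (.inr 1) < s (.inr 0)} ∩
      (fun s v => inversionScale s - 2 * s (.inl v)) ⁻¹' Set.univ.pi fun _ => Set.Ioi 0 := by
    ext s
    simp [inversionDomain, and_assoc]
  rw [this]
  refine ContinuousOn.isOpen_inter_preimage ?_ ?_ (isOpen_set_pi Set.finite_univ fun _ _ => isOpen_Ioi)
  · exact continuousOn_pi.2 fun v =>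
      (continuousOn_inversionScale.mono fun s hs => hs.2).sub (by fun_prop)
  · exact (isOpen_lt continuous_const (continuous_apply _)).inter
      (isOpen_lt (continuous_apply _) (continuous_apply _))

end JoinK2Inverse

lemma interior_nonempty_of_leftInvOn {X Y : Type*} [TopologicalSpace X] [TopologicalSpace Y]
    {A : Set X} {B O : Set Y} {F : X → Y} {G : Y → X} (hA : IsOpen A) (hO : IsOpen O)
    (hG : ContinuousOn G O) (hFG : Set.LeftInvOn F G O) (hF : Set.MapsTo F A B) {y : Y}
    (hyO : y ∈ O) (hyA : G y ∈ A) : (interior B).Nonempty :=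
  ⟨y, (hG.isOpen_inter_preimage hO hA).subset_interior_iff.2
    (fun _ hz => hFG hz.1 ▸ hF hz.2) ⟨hyO, hyA⟩⟩

/-- If `radii_{a=b=1}(G ⊕ K₂)` has non-empty interior in `ℝ^V` then
`radii₃(G ⊕ K₂)` has non-empty interior in `ℝ^{V ∪ {a,b}}`. -/
theorem radii_interior_of_unit_K2 {V : Type*} [Fintype V] (G : SimpleGraph V)
    (h : (interior {r : V → ℝ |
      Sum.elim r (fun _ : Fin 2 => (1 : ℝ)) ∈ radiiSet 3 (joinK2 G)}).Nonempty) :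
    (interior (radiiSet 3 (joinK2 G))).Nonempty := by
  obtain ⟨r₀, hr₀⟩ := h
  replace hr₀ : r₀ ∈ interior (unitK2Radii 3 G) := hr₀
  have hr₀_pos : ∀ v, 0 < r₀ v := fun v =>
    pos_of_mem_radiiSet (interior_subset hr₀ : r₀ ∈ unitK2Radii 3 G) (Sum.inl v)
  have hw : (2 : ℝ) < 3 := by norm_num
  refine interior_nonempty_of_leftInvOn (F := fun x => invertedRadii x.1 x.2.1 x.2.2)
    (G := fun s => (unitRadii s, inversionOffset s, inversionScale s))
    (isOpen_interior.prod (isOpen_Ioi.prod isOpen_Ioi)) isOpen_inversionDomain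
    continuousOn_inversionParams (fun s hs => invertedRadii_unitRadii hs)
    (fun x hx => invertedRadii_mem_radiiSet (interior_subset hx.1) hx.2.1 hx.2.2)
    (invertedRadii_mem_inversionDomain hr₀_pos hw one_pos) ?_
  rw [unitRadii_invertedRadii hr₀_pos hw one_pos, inversionOffset_invertedRadii hw one_pos,
    inversionScale_invertedRadii hw one_pos]
  exact ⟨hr₀, hw, zero_lt_one (α := ℝ)⟩

end
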